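/- arXiv:1801.00980 — 2 statements merged into one kernel-verified Lean document; each statement's English description precedes it below -/
import Mathlib

section
/- Suppose μ_i > r for some i, and fix γ > 0. Let π̂(1, ρ) be the unique maximizer of q_ρ(π) = π·(μ - r1) - (ρ/2)·πᵀΣπ over {π ≥ 0, π·1 ≤ 1}. Then there exists ε > 0 such that π̂(1, ρ)·1 > ε for all ρ ∈ (0, γ]. Consequently, inf over ρ ∈ (0, γ] of π̂(1,ρ)ᵀΣπ̂(1,ρ) is strictly positive. -/
open Matrix Set

/-- The feasible set of portfolios: componentwise nonnegative, weights summing to at most `α`. -/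
def feasible (d : ℕ) (α : ℝ) : Set (Fin d → ℝ) :=
  {p : Fin d → ℝ | (∀ i, 0 ≤ p i) ∧ ∑ i, p i ≤ α}

/-- The mean-variance objective `π·(μ - r1) - (ρ/2)·πᵀΣπ`. -/
noncomputable def mvObj {d : ℕ} (S : Matrix (Fin d) (Fin d) ℝ) (μ : Fin d → ℝ) (r ρ : ℝ)
    (p : Fin d → ℝ) : ℝ :=
  p ⬝ᵥ (μ - r • (1 : Fin d → ℝ)) - ρ / 2 * (p ⬝ᵥ S.mulVec p)

/-!
Testing the objective on `t eᵢ` with `μᵢ > r` and `t = min 1 ((μᵢ - r) / (γ Σᵢᵢ))` shows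
`sup q_ρ ≥ δ := t (μᵢ - r) / 2 > 0` uniformly in `ρ ∈ (0, γ]`, whereas
`q_ρ(π) ≤ (π·1) Σⱼ |μⱼ - r|` on the feasible set; so the maximizers have total weight at least
`δ / Σⱼ |μⱼ - r|`. The quadratic form of `Σ` is continuous and positive on the compact part of
the feasible set where `π·1 ≥ ε`, hence bounded below there by a positive constant.
-/

variable {d : ℕ}

theorem isCompact_feasible (d : ℕ) (α : ℝ) : IsCompact (feasible d α) := by
  refine (isCompact_Icc (a := 0) (b := fun _ => α)).of_isClosed_subset ?_ ?_
  · have hnonneg : IsClosed {p : Fin d → ℝ | ∀ i, 0 ≤ p i} := by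
      simpa only [ofPred_forall] using
        isClosed_iInter fun i => isClosed_le continuous_const (continuous_apply i)
    exact hnonneg.inter (isClosed_le (continuous_finsetSum _ fun i _ => continuous_apply i)
      continuous_const)
  · rintro p ⟨hp, hsum⟩
    exact ⟨hp, fun j => (Finset.single_le_sum (fun k _ => hp k) (Finset.mem_univ j)).trans hsum⟩

theorem single_mem_feasible (i : Fin d) {t α : ℝ} (ht : 0 ≤ t) (htα : t ≤ α) :
    Pi.single i t ∈ feasible d α := by
  refine ⟨fun j => ?_, by simpa using htα⟩
  rcases eq_or_ne j i with rfl | hj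
  · simpa using ht
  · simp [hj]

theorem mvObj_single (S : Matrix (Fin d) (Fin d) ℝ) (μ : Fin d → ℝ) (r ρ : ℝ) (i : Fin d)
    (t : ℝ) : mvObj S μ r ρ (Pi.single i t) = t * (μ i - r) - ρ / 2 * (S i i * t ^ 2) := by
  simp only [mvObj, dotProduct_sub, single_dotProduct, dotProduct_smul, Pi.one_apply, mul_one,
    smul_eq_mul, mulVec_single, op_smul_eq_smul, col_apply]
  ring

theorem mvObj_le_sum_mul {S : Matrix (Fin d) (Fin d) ℝ} (hS : S.PosSemidef) (μ : Fin d → ℝ)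
    (r : ℝ) {ρ : ℝ} (hρ : 0 ≤ ρ) {p : Fin d → ℝ} (hp : ∀ j, 0 ≤ p j) :
    mvObj S μ r ρ p ≤ (∑ j, p j) * ∑ j, |μ j - r| := by
  have hquad : 0 ≤ ρ / 2 * (p ⬝ᵥ S *ᵥ p) :=
    mul_nonneg (by positivity) (by simpa using hS.dotProduct_mulVec_nonneg p)
  have hlin : p ⬝ᵥ (μ - r • 1) ≤ (∑ j, p j) * ∑ j, |μ j - r| := by
    rw [Finset.sum_mul]
    refine Finset.sum_le_sum fun j _ => ?_
    simp only [Pi.sub_apply, Pi.smul_apply, Pi.one_apply, smul_eq_mul, mul_one]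
    exact mul_le_mul_of_nonneg_left ((le_abs_self _).trans
      (Finset.single_le_sum (fun k _ => abs_nonneg (μ k - r)) (Finset.mem_univ j))) (hp j)
  unfold mvObj
  linarith

theorem le_mvObj_single {S : Matrix (Fin d) (Fin d) ℝ} {i : Fin d} (hSii : 0 < S i i)
    {μ : Fin d → ℝ} {r : ℝ} (hi : r < μ i) {ρ γ : ℝ} (hργ : ρ ≤ γ) (hγ : 0 < γ) :
    (μ i - r) / 2 * min 1 ((μ i - r) / (γ * S i i)) ≤
      mvObj S μ r ρ (Pi.single i (min 1 ((μ i - r) / (γ * S i i)))) := by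
  set a := μ i - r
  set t := min 1 (a / (γ * S i i))
  have ht : 0 ≤ t := le_min zero_le_one (div_nonneg (sub_pos.2 hi).le (by positivity))
  have hγt : γ * S i i * t ≤ a := by
    rw [← le_div_iff₀' (by positivity)]
    exact min_le_right _ _
  rw [mvObj_single]
  nlinarith [mul_le_mul_of_nonneg_right hργ (by positivity : 0 ≤ S i i * t ^ 2)]

theorem Matrix.PosDef.exists_pos_le_dotProduct_mulVec {S : Matrix (Fin d) (Fin d) ℝ}
    (hS : S.PosDef) (α : ℝ) {ε : ℝ} (hε : 0 < ε) :
    ∃ c > 0, ∀ p ∈ feasible d α, ε ≤ ∑ j, p j → c ≤ p ⬝ᵥ S *ᵥ p := by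
  have hK : IsCompact (feasible d α ∩ {p | ε ≤ ∑ j, p j}) :=
    (isCompact_feasible d α).inter_right (isClosed_le continuous_const (by fun_prop))
  have hpos : ∀ p ∈ feasible d α ∩ {p | ε ≤ ∑ j, p j}, 0 < p ⬝ᵥ S *ᵥ p := by
    rintro p ⟨-, hεp⟩
    have hp : p ≠ 0 := by
      rintro rfl
      exact hε.not_ge (by simpa using hεp)
    simpa using hS.dotProduct_mulVec_pos hp
  obtain ⟨c, hc, hle⟩ := hK.exists_forall_le' (by fun_prop) hpos
  exact ⟨c, hc, fun p hp hεp => hle p ⟨hp, hεp⟩⟩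

theorem exists_pos_lt_sum_of_isMaxOn {S : Matrix (Fin d) (Fin d) ℝ} (hS : S.PosDef)
    {μ : Fin d → ℝ} {r γ : ℝ} (hγ : 0 < γ) {i : Fin d} (hi : r < μ i) :
    ∃ ε > 0, ∀ ρ p, 0 ≤ ρ → ρ ≤ γ → p ∈ feasible d 1 →
      IsMaxOn (mvObj S μ r ρ) (feasible d 1) p → ε < ∑ j, p j := by
  set a := μ i - r
  set t := min 1 (a / (γ * S i i))
  set M := ∑ j, |μ j - r|
  have ha : 0 < a := sub_pos.2 hi
  have hSii : 0 < S i i := hS.diag_pos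
  have ht : 0 < t := lt_min one_pos (by positivity)
  have hM : 0 < M := ha.trans_le ((le_abs_self a).trans
    (Finset.single_le_sum (fun j _ => abs_nonneg (μ j - r)) (Finset.mem_univ i)))
  refine ⟨a / 2 * t / (2 * M), by positivity, fun ρ p hρ hργ hp hmax => ?_⟩
  have hδ : a / 2 * t ≤ (∑ j, p j) * M := calc
    a / 2 * t ≤ mvObj S μ r ρ (Pi.single i t) := le_mvObj_single hSii hi hργ hγ
    _ ≤ mvObj S μ r ρ p := hmax (single_mem_feasible i ht.le (min_le_left _ _))
    _ ≤ (∑ j, p j) * M := mvObj_le_sum_mul hS.posSemidef μ r hρ hp.1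
  rw [div_lt_iff₀ (by positivity)]
  linarith [mul_pos ha ht]

theorem stmt6 {d : ℕ} (S : Matrix (Fin d) (Fin d) ℝ) (hS : S.PosDef)
    (μ : Fin d → ℝ) (r γ : ℝ) (hγ : 0 < γ) (i : Fin d) (hi : r < μ i)
    (P : ℝ → Fin d → ℝ)
    (hP : ∀ ρ : ℝ, 0 < ρ → ρ ≤ γ →
      P ρ ∈ feasible d 1 ∧ IsMaxOn (mvObj S μ r ρ) (feasible d 1) (P ρ)) :
    (∃ ε > (0 : ℝ), ∀ ρ : ℝ, 0 < ρ → ρ ≤ γ → ε < ∑ j, P ρ j) ∧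
    (∃ c > (0 : ℝ), ∀ ρ : ℝ, 0 < ρ → ρ ≤ γ → c ≤ P ρ ⬝ᵥ S.mulVec (P ρ)) := by
  obtain ⟨ε, hε, hsum⟩ := exists_pos_lt_sum_of_isMaxOn hS hγ hi
  have hsumP : ∀ ρ : ℝ, 0 < ρ → ρ ≤ γ → ε < ∑ j, P ρ j := fun ρ h0 h1 =>
    hsum ρ (P ρ) h0.le h1 (hP ρ h0 h1).1 (hP ρ h0 h1).2
  obtain ⟨c, hc, hquad⟩ := hS.exists_pos_le_dotProduct_mulVec 1 hε
  exact ⟨⟨ε, hε, hsumP⟩, c, hc, fun ρ h0 h1 => hquad _ (hP ρ h0 h1).1 (hsumP ρ h0 h1).le⟩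
end

section
/- Let π̂ = Σ⁻¹(μ - r1) with all components strictly positive, ζ = Σ⁻¹1/(1ᵀΣ⁻¹1), and suppose ζ ≥ 0 componentwise. For γ·α < 1ᵀπ̂, the vector π(α) := π̂/(γα) + ζ·(1 - 1ᵀπ̂/(γα)) satisfies π(α)·1 = 1, and whenever additionally π(α) ≥ 0 componentwise, π(α) is the unique maximizer of π·(μ - r1) - (γα/2)πᵀΣπ over {π ≥ 0, π·1 ≤ 1}. -/
open Matrix Set

/-!
With `λ = (1ᵀπ̂ - γα) / (1ᵀΣ⁻¹1) ≥ 0`, the vector `π(α)` satisfies the stationarity condition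
`(μ - r1) - γα Σ π(α) = λ 1` and has weights summing to `1`, so it is a KKT point for the budget
constraint. Around such a point the concave objective `f` expands exactly as
`f q - f π(α) = λ (1ᵀq - 1) - (γα/2) (q - π(α))ᵀ Σ (q - π(α))`,
which is `≤ 0` on the feasible set, with equality only at `q = π(α)` since `Σ` is positive definite.
-/

section KKT

variable {d : ℕ} {S : Matrix (Fin d) (Fin d) ℝ} {μ p q : Fin d → ℝ} {r ρ L α : ℝ}

theorem Matrix.IsHermitian.dotProduct_mulVec_comm {n : Type*} [Fintype n]
    {A : Matrix n n ℝ} (hA : A.IsHermitian) (u v : n → ℝ) : u ⬝ᵥ A *ᵥ v = v ⬝ᵥ A *ᵥ u := by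
  rw [← dotProduct_transpose_mulVec, (isHermitian_iff_isSymm.mp hA).eq]

theorem mvObj_sub_mvObj_of_stationary (hS : S.IsHermitian)
    (hstat : μ - r • 1 - ρ • S *ᵥ p = L • 1) (q : Fin d → ℝ) :
    mvObj S μ r ρ q - mvObj S μ r ρ p =
      L * (∑ i, q i - ∑ i, p i) - ρ / 2 * ((q - p) ⬝ᵥ S *ᵥ (q - p)) := by
  have hlin : (q - p) ⬝ᵥ (μ - r • 1) = ρ * ((q - p) ⬝ᵥ S *ᵥ p) + L * (∑ i, q i - ∑ i, p i) := by
    rw [show μ - r • 1 = ρ • S *ᵥ p + L • 1 by rw [← hstat]; abel, dotProduct_add,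
      dotProduct_smul, dotProduct_smul, dotProduct_one]
    simp only [Pi.sub_apply, Finset.sum_sub_distrib, smul_eq_mul]
  have hsymm := hS.dotProduct_mulVec_comm p q
  simp only [mvObj, sub_dotProduct, dotProduct_sub, mulVec_sub] at hlin ⊢
  linear_combination hlin - ρ / 2 * hsymm

theorem isMaxOn_mvObj_of_kkt (hS : S.PosDef) (hρ : 0 ≤ ρ) (hL : 0 ≤ L)
    (hstat : μ - r • 1 - ρ • S *ᵥ p = L • 1) (hbudget : ∑ i, p i = α) :
    IsMaxOn (mvObj S μ r ρ) (feasible d α) p := by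
  intro q hq
  have hgap := mvObj_sub_mvObj_of_stationary hS.isHermitian hstat q
  have hslack : L * (∑ i, q i - ∑ i, p i) ≤ 0 :=
    mul_nonpos_of_nonneg_of_nonpos hL (by linarith [hq.2])
  have hquad : 0 ≤ ρ / 2 * ((q - p) ⬝ᵥ S *ᵥ (q - p)) :=
    mul_nonneg (by positivity) (by simpa using hS.posSemidef.dotProduct_mulVec_nonneg (q - p))
  show mvObj S μ r ρ q ≤ mvObj S μ r ρ p
  linarith

theorem eq_of_mvObj_le_of_kkt (hS : S.PosDef) (hρ : 0 < ρ) (hL : 0 ≤ L)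
    (hstat : μ - r • 1 - ρ • S *ᵥ p = L • 1) (hbudget : ∑ i, p i = α)
    (hq : ∑ i, q i ≤ α) (hle : mvObj S μ r ρ p ≤ mvObj S μ r ρ q) : q = p := by
  by_contra hne
  have hgap := mvObj_sub_mvObj_of_stationary hS.isHermitian hstat q
  have hslack : L * (∑ i, q i - ∑ i, p i) ≤ 0 :=
    mul_nonpos_of_nonneg_of_nonpos hL (by linarith)
  have hquad : 0 < ρ / 2 * ((q - p) ⬝ᵥ S *ᵥ (q - p)) :=
    mul_pos (by positivity) (by simpa using hS.dotProduct_mulVec_pos (sub_ne_zero.mpr hne))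
  linarith

end KKT

section Lifestyling

variable {d : ℕ} (S : Matrix (Fin d) (Fin d) ℝ) (μ : Fin d → ℝ) (r ρ : ℝ)

noncomputable def meanVarianceWeights : Fin d → ℝ := S⁻¹ *ᵥ (μ - r • 1)

noncomputable def minVarianceWeights : Fin d → ℝ := (1 ⬝ᵥ S⁻¹ *ᵥ 1)⁻¹ • S⁻¹ *ᵥ 1

noncomputable def lifestyling : Fin d → ℝ :=
  ρ⁻¹ • meanVarianceWeights S μ r +
    (1 - (∑ j, meanVarianceWeights S μ r j) / ρ) • minVarianceWeights S

variable {S}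

theorem one_dotProduct_inv_mulVec_one_pos [NeZero d] (hS : S.PosDef) : 0 < 1 ⬝ᵥ S⁻¹ *ᵥ 1 := by
  simpa using hS.inv.dotProduct_mulVec_pos (one_ne_zero (α := Fin d → ℝ))

theorem sum_minVarianceWeights [NeZero d] (hS : S.PosDef) : ∑ i, minVarianceWeights S i = 1 := by
  simp only [minVarianceWeights, Pi.smul_apply, smul_eq_mul, ← Finset.mul_sum, ← one_dotProduct]
  exact inv_mul_cancel₀ (one_dotProduct_inv_mulVec_one_pos hS).ne'

theorem sum_lifestyling [NeZero d] (hS : S.PosDef) : ∑ i, lifestyling S μ r ρ i = 1 := by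
  simp only [lifestyling, Pi.add_apply, Pi.smul_apply, smul_eq_mul, Finset.sum_add_distrib,
    ← Finset.mul_sum, sum_minVarianceWeights hS]
  ring

theorem lifestyling_stationary (hS : IsUnit S.det) (hρ : ρ ≠ 0) :
    μ - r • 1 - ρ • S *ᵥ lifestyling S μ r ρ =
      ((∑ j, meanVarianceWeights S μ r j - ρ) / (1 ⬝ᵥ S⁻¹ *ᵥ 1)) • 1 := by
  have hcancel (v : Fin d → ℝ) : S *ᵥ (S⁻¹ *ᵥ v) = v := by
    rw [mulVec_mulVec, mul_nonsing_inv _ hS, one_mulVec]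
  simp only [lifestyling, meanVarianceWeights, minVarianceWeights, mulVec_add, mulVec_smul,
    hcancel, smul_add, smul_smul]
  ext i
  simp only [Pi.sub_apply, Pi.add_apply, Pi.smul_apply, smul_eq_mul]
  field_simp
  ring

end Lifestyling

theorem stmt14_general {d : ℕ} (S : Matrix (Fin d) (Fin d) ℝ) (hS : S.PosDef)
    (μ : Fin d → ℝ) (r γ α : ℝ) (hγ : 0 < γ) (hα₀ : 0 < α)
    (hsmall : γ * α < ∑ j, S⁻¹.mulVec (μ - r • (1 : Fin d → ℝ)) j) :
    let pihat : Fin d → ℝ := S⁻¹.mulVec (μ - r • (1 : Fin d → ℝ))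
    let ζ : Fin d → ℝ :=
      ((1 : Fin d → ℝ) ⬝ᵥ S⁻¹.mulVec (1 : Fin d → ℝ))⁻¹ • S⁻¹.mulVec (1 : Fin d → ℝ)
    let pα : Fin d → ℝ := (γ * α)⁻¹ • pihat + (1 - (∑ j, pihat j) / (γ * α)) • ζ
    (∑ i, pα i = 1) ∧
    ((∀ i, 0 ≤ pα i) →
      pα ∈ feasible d 1 ∧ IsMaxOn (mvObj S μ r (γ * α)) (feasible d 1) pα ∧
      ∀ q ∈ feasible d 1, IsMaxOn (mvObj S μ r (γ * α)) (feasible d 1) q → q = pα) := by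
  show (∑ i, lifestyling S μ r (γ * α) i = 1) ∧ _
  have hρ : 0 < γ * α := mul_pos hγ hα₀
  have : NeZero d := ⟨by rintro rfl; simp at hsmall; linarith⟩
  have hsum := sum_lifestyling μ r (γ * α) hS
  have hstat := lifestyling_stationary μ r (γ * α) hS.det_pos.ne'.isUnit hρ.ne'
  have hL : 0 ≤ (∑ j, meanVarianceWeights S μ r j - γ * α) / (1 ⬝ᵥ S⁻¹ *ᵥ 1) :=
    div_nonneg (by unfold meanVarianceWeights; linarith) (one_dotProduct_inv_mulVec_one_pos hS).le
  refine ⟨hsum, fun hnn => ⟨⟨hnn, hsum.le⟩, isMaxOn_mvObj_of_kkt hS hρ.le hL hstat hsum,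
    fun q hq hqmax => eq_of_mvObj_le_of_kkt hS hρ hL hstat hsum hq.2 (hqmax ⟨hnn, hsum.le⟩)⟩⟩

theorem stmt14 {d : ℕ} (S : Matrix (Fin d) (Fin d) ℝ) (hS : S.PosDef)
    (μ : Fin d → ℝ) (r γ α : ℝ) (hγ : 0 < γ) (hα₀ : 0 < α) (hα₁ : α ≤ 1)
    (hpos : ∀ i, 0 < S⁻¹.mulVec (μ - r • (1 : Fin d → ℝ)) i)
    (hζnn : ∀ i,
      0 ≤ (((1 : Fin d → ℝ) ⬝ᵥ S⁻¹.mulVec (1 : Fin d → ℝ))⁻¹ •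
        S⁻¹.mulVec (1 : Fin d → ℝ)) i)
    (hsmall : γ * α < ∑ j, S⁻¹.mulVec (μ - r • (1 : Fin d → ℝ)) j) :
    let pihat : Fin d → ℝ := S⁻¹.mulVec (μ - r • (1 : Fin d → ℝ))
    let ζ : Fin d → ℝ :=
      ((1 : Fin d → ℝ) ⬝ᵥ S⁻¹.mulVec (1 : Fin d → ℝ))⁻¹ • S⁻¹.mulVec (1 : Fin d → ℝ)
    let pα : Fin d → ℝ := (γ * α)⁻¹ • pihat + (1 - (∑ j, pihat j) / (γ * α)) • ζ
    (∑ i, pα i = 1) ∧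
    ((∀ i, 0 ≤ pα i) →
      pα ∈ feasible d 1 ∧ IsMaxOn (mvObj S μ r (γ * α)) (feasible d 1) pα ∧
      ∀ q ∈ feasible d 1, IsMaxOn (mvObj S μ r (γ * α)) (feasible d 1) q → q = pα) :=
  stmt14_general S hS μ r γ α hγ hα₀ hsmall
end
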